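/- arXiv:2411.16612 — 3 statements merged into one kernel-verified Lean document; each statement's English description precedes it below -/
import Mathlib

section
/- Thread ids computed from creation history are injective: in any consistent interleaving, distinct create events yield distinct thread ids, where the id of a created thread is the parent's id concatenated with the number of threads the parent has previously created. -/
namespace CW

/-- Thread ids are finite sequences of naturals (creation histories). -/
abbrev TID := List Nat

/-- Actions of the core language `Lang`. -/
inductive Act (Mutex Global L V : Type) : Type where
  | lock (m : Mutex)
  | unlock (m : Mutex)
  | create (tmpl : Nat)
  | localUpd (f : L → L)
  | read (g : Global) (f : L → V → L)
  | write (g : Global) (f : L → V)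
  | assert (p : L → Bool)
  | pos (c : L → Bool)
  | neg (c : L → Bool)

/-- A program: thread templates (numbered CFGs, template 0 is `main`),
    start nodes, initial local state and initial values of globals. -/
structure Prog (Node Mutex Global L V : Type) where
  edges : Nat → Node → Act Mutex Global L V → Node → Prop
  start : Nat → Node
  initLocal : L
  initGlobal : Global → V

/-- A configuration `(L, M, G)`: thread map (template, node, local state, create counter),
    mutex ownership map, and values of globals. -/
structure Config (Node Mutex Global L V : Type) where
  threads : TID → Option (Nat × Node × L × Nat)
  mutexes : Mutex → Option TID
  globals : Global → V

variable {Node Mutex Global L V : Type}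

/-- The canonical initial configuration. -/
def initConfig (P : Prog Node Mutex Global L V) : Config Node Mutex Global L V where
  threads := fun t => if t = ([] : TID) then some (0, P.start 0, P.initLocal, 0) else none
  mutexes := fun _ => none
  globals := P.initGlobal

/-- The initial-state condition: only the initial thread exists, at the start node of main
    with the initial local state, no mutex held, globals at declared initial values. -/
def IsInitGen (startF : Nat → Node) (l0 : L) (g0 : Global → V)
    (c : Config Node Mutex Global L V) : Prop :=
  (∀ t : TID, c.threads t = if t = ([] : TID) then some (0, startF 0, l0, 0) else none) ∧
  (∀ m, c.mutexes m = none) ∧ (∀ g, c.globals g = g0 g)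

def IsInit (P : Prog Node Mutex Global L V) (c : Config Node Mutex Global L V) : Prop :=
  IsInitGen P.start P.initLocal P.initGlobal c

/-- Admissibility of an action for a thread with local state `l` and create counter `cnt`. -/
def admissibleAct (c : Config Node Mutex Global L V) (t : TID) (l : L) (cnt : Nat) :
    Act Mutex Global L V → Prop
  | .lock m => c.mutexes m = none
  | .unlock m => c.mutexes m = some t
  | .create _ => c.threads (t ++ [cnt]) = none
  | .pos p => p l = true
  | .neg p => p l = false
  | _ => True

variable [DecidableEq Mutex] [DecidableEq Global]

/-- The effect of action `a` taken by thread `t` moving to node `v`. -/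
def applyAct (startF : Nat → Node) (l0 : L) (c : Config Node Mutex Global L V)
    (t : TID) (tmpl : Nat) (v : Node) (l : L) (cnt : Nat) :
    Act Mutex Global L V → Config Node Mutex Global L V
  | .lock m =>
      { threads := Function.update c.threads t (some (tmpl, v, l, cnt)),
        mutexes := Function.update c.mutexes m (some t),
        globals := c.globals }
  | .unlock m =>
      { threads := Function.update c.threads t (some (tmpl, v, l, cnt)),
        mutexes := Function.update c.mutexes m none,
        globals := c.globals }
  | .create k =>
      { threads := Function.update
          (Function.update c.threads t (some (tmpl, v, l, cnt + 1)))
          (t ++ [cnt]) (some (k, startF k, l0, 0)),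
        mutexes := c.mutexes, globals := c.globals }
  | .localUpd f =>
      { threads := Function.update c.threads t (some (tmpl, v, f l, cnt)),
        mutexes := c.mutexes, globals := c.globals }
  | .read g f =>
      { threads := Function.update c.threads t (some (tmpl, v, f l (c.globals g), cnt)),
        mutexes := c.mutexes, globals := c.globals }
  | .write g f =>
      { threads := Function.update c.threads t (some (tmpl, v, l, cnt)),
        mutexes := c.mutexes,
        globals := Function.update c.globals g (f l) }
  | _ =>
      { threads := Function.update c.threads t (some (tmpl, v, l, cnt)),
        mutexes := c.mutexes, globals := c.globals }

/-- One consistent step of the interleaving semantics. -/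
def Step (P : Prog Node Mutex Global L V) (c : Config Node Mutex Global L V) (t : TID)
    (e : Node × Act Mutex Global L V × Node) (c' : Config Node Mutex Global L V) : Prop :=
  ∃ tmpl l cnt, c.threads t = some (tmpl, e.1, l, cnt) ∧
    P.edges tmpl e.1 e.2.1 e.2.2 ∧
    admissibleAct c t l cnt e.2.1 ∧
    c' = applyAct P.start P.initLocal c t tmpl e.2.2 l cnt e.2.1

/-- A consistent interleaving of `P`: a sequence of configurations connected by
    admissible thread-labeled steps, starting in the initial state. -/
structure Interleaving (P : Prog Node Mutex Global L V) where
  len : Nat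
  states : Fin (len + 1) → Config Node Mutex Global L V
  who : Fin len → TID
  edge : Fin len → Node × Act Mutex Global L V × Node
  init : IsInit P (states 0)
  consistent : ∀ k : Fin len, Step P (states k.castSucc) (who k) (edge k) (states k.succ)

/-- The assertion at step `k` of interleaving `i` is violated. -/
def Interleaving.ViolatesAt {P : Prog Node Mutex Global L V} (i : Interleaving P)
    (k : Fin i.len) : Prop :=
  ∃ p u v, i.edge k = (u, Act.assert p, v) ∧
    ∃ tmpl l cnt, (i.states k.castSucc).threads (i.who k) = some (tmpl, u, l, cnt) ∧ p l = false

/-- Safety w.r.t. the interleaving semantics. -/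
def Safe (P : Prog Node Mutex Global L V) : Prop :=
  ∀ (i : Interleaving P) (k : Fin i.len), ¬ i.ViolatesAt k

/-- A single step never deletes threads. -/
lemma step_threads_mono {P : Prog Node Mutex Global L V}
    {c c' : Config Node Mutex Global L V} {t : TID} {e}
    (h : Step P c t e c') (s : TID) (hs : c.threads s ≠ none) :
    c'.threads s ≠ none := by
  obtain ⟨tmpl, l, cnt, h1, h2, h3, rfl⟩ := h
  cases e.2.1 <;>
    simp only [applyAct, Function.update] <;>
    split <;> simp_all <;> split <;> simp_all

lemma threads_mono {P : Prog Node Mutex Global L V} (i : Interleaving P)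
    (m m' : Fin (i.len + 1)) (hle : m ≤ m') (s : TID)
    (hs : (i.states m).threads s ≠ none) : (i.states m').threads s ≠ none := by
  obtain ⟨m, hm⟩ := m
  obtain ⟨m', hm'⟩ := m'
  simp only [Fin.mk_le_mk] at hle
  obtain ⟨d, rfl⟩ : ∃ d, m' = m + d := ⟨m' - m, by omega⟩
  clear hle
  induction d with
  | zero => exact hs
  | succ n ih =>
    have hlt : m + n < i.len := by omega
    exact step_threads_mono (i.consistent ⟨m + n, hlt⟩) s (ih (by omega))

lemma created_exists {P : Prog Node Mutex Global L V} (i : Interleaving P)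
    (j : Fin i.len) {k tmpl l cnt}
    (he : (i.edge j).2.1 = Act.create k)
    (ht : (i.states j.castSucc).threads (i.who j) = some (tmpl, (i.edge j).1, l, cnt)) :
    (i.states j.succ).threads (i.who j ++ [cnt]) ≠ none := by
  obtain ⟨tmpl', l', cnt', h1, h2, h3, h4⟩ := i.consistent j
  rw [ht] at h1
  obtain ⟨rfl, rfl, rfl⟩ : tmpl' = tmpl ∧ l' = l ∧ cnt' = cnt := by
    simpa using h1.symm
  rw [he] at h4
  rw [h4]
  simp [applyAct, Function.update]

/-- Thread ids computed from creation history are injective: in any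
consistent interleaving, distinct create events yield distinct thread ids, where the id of
a created thread is the parent's id concatenated with the number of threads the parent
has previously created. -/
theorem created_tids_injective (P : Prog Node Mutex Global L V) (i : Interleaving P) :
    ∀ (j j' : Fin i.len) (k k' : Nat) (tmpl tmpl' : Nat) (l l' : L) (cnt cnt' : Nat),
      (i.edge j).2.1 = Act.create k → (i.edge j').2.1 = Act.create k' →
      (i.states j.castSucc).threads (i.who j) = some (tmpl, (i.edge j).1, l, cnt) →
      (i.states j'.castSucc).threads (i.who j') = some (tmpl', (i.edge j').1, l', cnt') →
      j ≠ j' →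
      i.who j ++ [cnt] ≠ i.who j' ++ [cnt'] := by
  have key : ∀ (j j' : Fin i.len) (k k' : Nat) (tmpl tmpl' : Nat) (l l' : L)
      (cnt cnt' : Nat),
      (i.edge j).2.1 = Act.create k → (i.edge j').2.1 = Act.create k' →
      (i.states j.castSucc).threads (i.who j) = some (tmpl, (i.edge j).1, l, cnt) →
      (i.states j'.castSucc).threads (i.who j') = some (tmpl', (i.edge j').1, l', cnt') →
      j < j' →
      i.who j ++ [cnt] ≠ i.who j' ++ [cnt'] := by
    intro j j' k k' tmpl tmpl' l l' cnt cnt' he he' ht ht' hlt heq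
    -- at step j', admissibility says the child tid is free
    obtain ⟨t2, l2, c2, h1, h2, h3, h4⟩ := i.consistent j'
    rw [ht'] at h1
    obtain ⟨rfl, rfl, rfl⟩ : t2 = tmpl' ∧ l2 = l' ∧ c2 = cnt' := by
      simpa using h1.symm
    rw [he'] at h3
    simp only [admissibleAct] at h3
    have hex := created_exists i j he ht
    have hle : j.succ ≤ j'.castSucc := by
      simp only [Fin.le_def, Fin.val_succ, Fin.coe_castSucc]
      exact hlt
    have := threads_mono i j.succ j'.castSucc hle _ hex
    rw [heq] at this
    exact this h3
  intro j j' k k' tmpl tmpl' l l' cnt cnt' he he' ht ht' hne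
  rcases lt_or_gt_of_ne hne with h | h
  · exact key j j' k k' tmpl tmpl' l l' cnt cnt' he he' ht ht' h
  · exact fun hq => key j' j k' k tmpl' tmpl l' l cnt' cnt he' he ht' ht h hq.symm
end CW
end

section
/- Ghost instrumentation preserves runs: for every consistent interleaving i of a program P and any ghost witness W for P, the interleaving π_ghost(i) obtained by extending the initial state with ghost variables, inserting the invariant-assertion edges given by Ψ_W, and replacing each edge e by δ_W(e), is a consistent interleaving of the witness-instrumented program P_W; moreover, projecting the final state of π_ghost(i) to the variables, mutexes, and thread locations of P yields the final state of i. -/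
namespace CW

variable {Node Mutex Global L V : Type}

variable [DecidableEq Mutex] [DecidableEq Global]

/-- Actions of `Lang_Atomic`: base actions, and atomic blocks `atomic{a; rest}` whose
first statement `a` is the only possibly inadmissible one. -/
inductive ActA (Mutex Global L V : Type) : Type where
  | base (a : Act Mutex Global L V)
  | atomic (a : Act Mutex Global L V) (rest : List (Act Mutex Global L V))

/-- Programs of `Lang_Atomic`. -/
structure ProgA (Node Mutex Global L V : Type) where
  edges : Nat → Node → ActA Mutex Global L V → Node → Prop
  start : Nat → Node
  initLocal : L
  initGlobal : Global → V

/-- Always-admissible statement kinds allowed inside the tail of an atomic block. -/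
def Act.Simple : Act Mutex Global L V → Prop
  | .localUpd _ => True
  | .read _ _ => True
  | .write _ _ => True
  | .assert _ => True
  | _ => False

/-- Apply one action of a thread `t` (keeping it at node `v`). -/
def applyOne (startF : Nat → Node) (l0 : L) (c : Config Node Mutex Global L V)
    (t : TID) (v : Node) (a : Act Mutex Global L V) : Config Node Mutex Global L V :=
  match c.threads t with
  | some (tmpl, _, l, cnt) => applyAct startF l0 c t tmpl v l cnt a
  | none => c

/-- Apply a sequence of actions of thread `t` in one atomic step. -/
def applyList (startF : Nat → Node) (l0 : L) (c : Config Node Mutex Global L V)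
    (t : TID) (v : Node) (as_ : List (Act Mutex Global L V)) : Config Node Mutex Global L V :=
  as_.foldl (fun c a => applyOne startF l0 c t v a) c

/-- One step of the interleaving semantics of `Lang_Atomic`; an atomic block is executed
as a whole, and is admissible iff its first statement is. -/
def StepA (P : ProgA Node Mutex Global L V) (c : Config Node Mutex Global L V) (t : TID)
    (e : Node × ActA Mutex Global L V × Node) (c' : Config Node Mutex Global L V) : Prop :=
  ∃ tmpl l cnt, c.threads t = some (tmpl, e.1, l, cnt) ∧
    P.edges tmpl e.1 e.2.1 e.2.2 ∧
    match e.2.1 with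
    | .base a => admissibleAct c t l cnt a ∧
        c' = applyAct P.start P.initLocal c t tmpl e.2.2 l cnt a
    | .atomic a rest => admissibleAct c t l cnt a ∧ (∀ b ∈ rest, b.Simple) ∧
        c' = applyList P.start P.initLocal
              (applyAct P.start P.initLocal c t tmpl e.2.2 l cnt a) t e.2.2 rest

/-- A consistent interleaving of a `Lang_Atomic` program. -/
structure InterleavingA (P : ProgA Node Mutex Global L V) where
  len : Nat
  states : Fin (len + 1) → Config Node Mutex Global L V
  who : Fin len → TID
  edge : Fin len → Node × ActA Mutex Global L V × Node
  init : IsInitGen P.start P.initLocal P.initGlobal (states 0)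
  consistent : ∀ k : Fin len, StepA P (states k.castSucc) (who k) (edge k) (states k.succ)

/-- An assertion (possibly inside an atomic block) is violated at step `k`: it evaluates to
false after executing the preceding statements of the block on the preceding state. -/
def InterleavingA.ViolatesAt {P : ProgA Node Mutex Global L V} (i : InterleavingA P)
    (k : Fin i.len) : Prop :=
  ∃ tmpl l cnt,
    (i.states k.castSucc).threads (i.who k) = some (tmpl, (i.edge k).1, l, cnt) ∧
    match (i.edge k).2.1 with
    | .base a => ∃ p, a = Act.assert p ∧ p l = false
    | .atomic a rest =>
        (∃ p, a = Act.assert p ∧ p l = false) ∨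
        ∃ n p, rest[n]? = some (Act.assert p) ∧
          ∃ tmpl' nd l' cnt',
            ((applyList P.start P.initLocal
                (applyAct P.start P.initLocal (i.states k.castSucc) (i.who k) tmpl
                  (i.edge k).2.2 l cnt a)
                (i.who k) (i.edge k).2.2 (rest.take n)).threads (i.who k))
              = some (tmpl', nd, l', cnt') ∧ p l' = false

/-- Safety of a `Lang_Atomic` program w.r.t. the interleaving semantics. -/
def SafeA (P : ProgA Node Mutex Global L V) : Prop :=
  ∀ (i : InterleavingA P) (k : Fin i.len), ¬ i.ViolatesAt k

variable {GGlobal GLoc : Type} [DecidableEq GGlobal]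

/-- Ghost updates: statements over the extended state that only write ghost locals and
ghost globals (reading program and ghost state is allowed). -/
def GhostUpd : Act Mutex (Global ⊕ GGlobal) (L × GLoc) V → Prop
  | .localUpd f => ∀ p, (f p).1 = p.1
  | .read _ f => ∀ p v, (f p v).1 = p.1
  | .write g _ => ∃ gg, g = Sum.inr gg
  | _ => False

/-- Ghost statements used to evaluate and assert invariants: ghost updates or asserts. -/
def GhostStmt (b : Act Mutex (Global ⊕ GGlobal) (L × GLoc) V) : Prop :=
  GhostUpd b ∨ ∃ p, b = Act.assert p

/-- A ghost witness `(D_g, X_g, U, I)` for `P`: initial values of fresh ghost globals,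
initial ghost local state, ghost updates per edge, and location invariants per node
(given as ghost statement sequences evaluating and asserting the invariant). -/
structure Witness (P : Prog Node Mutex Global L V) (GGlobal GLoc : Type) where
  ginit : GGlobal → V
  glinit : GLoc
  upd : Nat → Node → Node → Option (List (Act Mutex (Global ⊕ GGlobal) (L × GLoc) V))
  inv : Node → Option (List (Act Mutex (Global ⊕ GGlobal) (L × GLoc) V))

/-- Well-formedness: ghost updates only modify ghost variables; invariant code consists of
ghost statements. -/
def Witness.WF {P : Prog Node Mutex Global L V} (W : Witness P GGlobal GLoc) : Prop :=
  (∀ tmpl u v us, W.upd tmpl u v = some us → ∀ b ∈ us, GhostUpd (GLoc := GLoc) b) ∧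
  (∀ u bs, W.inv u = some bs → ∀ b ∈ bs, GhostStmt (GLoc := GLoc) b)

/-- Lift a program action to the extended (ghost-instrumented) state spaces. -/
def liftAct : Act Mutex Global L V → Act Mutex (Global ⊕ GGlobal) (L × GLoc) V
  | .lock m => .lock m
  | .unlock m => .unlock m
  | .create k => .create k
  | .localUpd f => .localUpd (fun p => (f p.1, p.2))
  | .read g f => .read (.inl g) (fun p v => (f p.1 v, p.2))
  | .write g f => .write (.inl g) (fun p => f p.1)
  | .assert p => .assert (fun q => p q.1)
  | .pos c => .pos (fun q => c q.1)
  | .neg c => .neg (fun q => c q.1)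

/-- The atomic block evaluating and asserting an invariant. -/
def invAct : List (Act Mutex (Global ⊕ GGlobal) (L × GLoc) V) →
    ActA Mutex (Global ⊕ GGlobal) (L × GLoc) V
  | [] => .atomic (.localUpd id) []
  | b :: bs => .atomic b bs

/-- `δ_W`: the instrumented action on an edge — the original action fused atomically with
the ghost updates, if any. -/
def deltaAct {P : Prog Node Mutex Global L V} (W : Witness P GGlobal GLoc)
    (tmpl : Nat) (u v : Node) (a : Act Mutex Global L V) :
    ActA Mutex (Global ⊕ GGlobal) (L × GLoc) V :=
  match W.upd tmpl u v with
  | some us => .atomic (liftAct a) us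
  | none => .base (liftAct a)

/-- Source node of the instrumented edge: the new node `(u, v)` if `Ψ_W u` is defined. -/
def srcNode {P : Prog Node Mutex Global L V} (W : Witness P GGlobal GLoc)
    (u v : Node) : Node ⊕ (Node × Node) :=
  if (W.inv u).isSome then .inr (u, v) else .inl u

/-- The witness-instrumented program `P_W`. -/
def instrument (P : Prog Node Mutex Global L V) (W : Witness P GGlobal GLoc) :
    ProgA (Node ⊕ (Node × Node)) Mutex (Global ⊕ GGlobal) (L × GLoc) V where
  edges := fun tmpl n act n' =>
    (∃ u a v, P.edges tmpl u a v ∧ n = srcNode W u v ∧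
        act = deltaAct W tmpl u v a ∧ n' = .inl v) ∨
    (∃ u a v bs, P.edges tmpl u a v ∧ W.inv u = some bs ∧
        n = .inl u ∧ act = invAct bs ∧ n' = .inr (u, v))
  start := fun k => .inl (P.start k)
  initLocal := (P.initLocal, W.glinit)
  initGlobal := Sum.elim P.initGlobal W.ginit

/-- Project an instrumented node back to the original node. -/
def projNode : Node ⊕ (Node × Node) → Node
  | .inl u => u
  | .inr p => p.1

/-- `π_P`: project a configuration of `P_W` back to a configuration of `P` (remove ghost
variables; keep program variables, mutexes and thread locations). -/
def projConfig (c : Config (Node ⊕ (Node × Node)) Mutex (Global ⊕ GGlobal) (L × GLoc) V) :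
    Config Node Mutex Global L V where
  threads := fun t => (c.threads t).map (fun e => (e.1, projNode e.2.1, e.2.2.1.1, e.2.2.2))
  mutexes := c.mutexes
  globals := fun g => c.globals (.inl g)

/-- A step of an instrumented interleaving is an inserted invariant-assertion step. -/
def IsInvStep {P : Prog Node Mutex Global L V} (W : Witness P GGlobal GLoc)
    (e : (Node ⊕ (Node × Node)) × ActA Mutex (Global ⊕ GGlobal) (L × GLoc) V ×
          (Node ⊕ (Node × Node))) : Prop :=
  ∃ u v bs, W.inv u = some bs ∧ e = (.inl u, invAct bs, .inr (u, v))

/-! ### Auxiliary definitions and lemmas for the simulation proof -/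

set_option linter.unusedSectionVars false

/-- Abbreviation for the configurations of the instrumented program. -/
abbrev Conf' (Node Mutex Global L V GGlobal GLoc : Type) :=
  Config (Node ⊕ (Node × Node)) Mutex (Global ⊕ GGlobal) (L × GLoc) V

theorem Config.ext' {c1 c2 : Config Node Mutex Global L V}
    (h1 : c1.threads = c2.threads) (h2 : c1.mutexes = c2.mutexes)
    (h3 : c1.globals = c2.globals) : c1 = c2 := by
  cases c1; cases c2; simp_all

/-- Alignment of one thread entry. -/
def TAl (tc : Option (Nat × Node × L × Nat))
    (tc' : Option (Nat × (Node ⊕ (Node × Node)) × (L × GLoc) × Nat)) : Prop :=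
  (tc = none ∧ tc' = none) ∨
    ∃ tm u l cnt gl, tc = some (tm, u, l, cnt) ∧ tc' = some (tm, .inl u, (l, gl), cnt)

/-- Alignment of configurations: same program data, threads at `.inl` nodes. -/
def Aligned (c : Config Node Mutex Global L V)
    (c' : Conf' Node Mutex Global L V GGlobal GLoc) : Prop :=
  (∀ t, TAl (GLoc := GLoc) (c.threads t) (c'.threads t)) ∧
  (∀ m, c'.mutexes m = c.mutexes m) ∧
  (∀ g, c'.globals (.inl g) = c.globals g)

/-- Relation between a configuration and its image under ghost statements of thread `t`. -/
def GRel (t : TID) (tm : Nat) (nd : Node ⊕ (Node × Node)) (l : L) (cnt : Nat)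
    (c c' : Conf' Node Mutex Global L V GGlobal GLoc) : Prop :=
  (∃ gl, c'.threads t = some (tm, nd, (l, gl), cnt)) ∧
  (∀ s, s ≠ t → c'.threads s = c.threads s) ∧
  (∀ m, c'.mutexes m = c.mutexes m) ∧
  (∀ g, c'.globals (Sum.inl g) = c.globals (Sum.inl g))

theorem GRel.refl' {c : Conf' Node Mutex Global L V GGlobal GLoc} {t tm nd l gl cnt}
    (h : c.threads t = some (tm, nd, (l, gl), cnt)) : GRel t tm nd l cnt c c :=
  ⟨⟨gl, h⟩, fun _ _ => rfl, fun _ => rfl, fun _ => rfl⟩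

theorem GRel.trans' {c c' c'' : Conf' Node Mutex Global L V GGlobal GLoc} {t tm nd l cnt}
    (h1 : GRel t tm nd l cnt c c') (h2 : GRel t tm nd l cnt c' c'') :
    GRel t tm nd l cnt c c'' :=
  ⟨h2.1, fun s hs => (h2.2.1 s hs).trans (h1.2.1 s hs),
   fun m => (h2.2.2.1 m).trans (h1.2.2.1 m),
   fun g => (h2.2.2.2 g).trans (h1.2.2.2 g)⟩

theorem ghost_simple {b : Act Mutex (Global ⊕ GGlobal) (L × GLoc) V}
    (hb : GhostStmt b) : b.Simple := by
  rcases hb with hb | ⟨p, rfl⟩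
  · cases b <;> simp [GhostUpd] at hb <;> trivial
  · trivial

theorem ghost_adm {b : Act Mutex (Global ⊕ GGlobal) (L × GLoc) V}
    (hb : GhostStmt b) (c : Conf' Node Mutex Global L V GGlobal GLoc) (t : TID)
    (lg : L × GLoc) (cnt : Nat) : admissibleAct c t lg cnt b := by
  rcases hb with hb | ⟨p, rfl⟩
  · cases b <;> simp [GhostUpd] at hb <;> trivial
  · trivial

theorem ghost_applyAct (startF : Nat → (Node ⊕ (Node × Node))) (l0 : L × GLoc)
    {b : Act Mutex (Global ⊕ GGlobal) (L × GLoc) V} (hb : GhostStmt b)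
    (c : Conf' Node Mutex Global L V GGlobal GLoc)
    (t : TID) (tm : Nat) (nd : Node ⊕ (Node × Node)) (l : L) (gl : GLoc) (cnt : Nat) :
    GRel t tm nd l cnt c (applyAct startF l0 c t tm nd (l, gl) cnt b) := by
  rcases hb with hb | ⟨p, rfl⟩
  · cases b with
    | localUpd f =>
        refine ⟨⟨(f (l, gl)).2, ?_⟩, fun s hs => ?_, fun _ => rfl, fun _ => rfl⟩
        · simp only [applyAct, Function.update_self]
          have : f (l, gl) = (l, (f (l, gl)).2) := Prod.ext (hb (l, gl)) rfl
          rw [this]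
        · simp only [applyAct, Function.update_of_ne hs]
    | read g f =>
        refine ⟨⟨(f (l, gl) (c.globals g)).2, ?_⟩, fun s hs => ?_, fun _ => rfl, fun _ => rfl⟩
        · simp only [applyAct, Function.update_self]
          have : f (l, gl) (c.globals g) = (l, (f (l, gl) (c.globals g)).2) :=
            Prod.ext (hb (l, gl) (c.globals g)) rfl
          rw [this]
        · simp only [applyAct, Function.update_of_ne hs]
    | write g f =>
        obtain ⟨gg, rfl⟩ := hb
        refine ⟨⟨gl, ?_⟩, fun s hs => ?_, fun _ => rfl, fun g' => ?_⟩
        · simp only [applyAct, Function.update_self]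
        · simp only [applyAct, Function.update_of_ne hs]
        · simp only [applyAct]
          exact Function.update_of_ne (by simp) _ _
    | lock m => simp [GhostUpd] at hb
    | unlock m => simp [GhostUpd] at hb
    | create k => simp [GhostUpd] at hb
    | assert p => simp [GhostUpd] at hb
    | pos p => simp [GhostUpd] at hb
    | neg p => simp [GhostUpd] at hb
  · refine ⟨⟨gl, ?_⟩, fun s hs => ?_, fun _ => rfl, fun _ => rfl⟩
    · simp only [applyAct, Function.update_self]
    · simp only [applyAct, Function.update_of_ne hs]

theorem ghost_applyList (startF : Nat → (Node ⊕ (Node × Node))) (l0 : L × GLoc)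
    {us : List (Act Mutex (Global ⊕ GGlobal) (L × GLoc) V)}
    (hus : ∀ b ∈ us, GhostStmt b) {t : TID} {tm : Nat} {nd : Node ⊕ (Node × Node)}
    {l : L} {cnt : Nat} :
    ∀ c c' : Conf' Node Mutex Global L V GGlobal GLoc, GRel t tm nd l cnt c c' →
      GRel t tm nd l cnt c (applyList startF l0 c' t nd us) := by
  induction us with
  | nil => exact fun c c' h => h
  | cons b rest ih =>
      intro c c' h
      obtain ⟨gl, hthr⟩ := h.1
      have h1 : applyOne startF l0 c' t nd b = applyAct startF l0 c' t tm nd (l, gl) cnt b := by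
        simp [applyOne, hthr]
      have hstep : GRel t tm nd l cnt c' (applyOne startF l0 c' t nd b) := by
        rw [h1]; exact ghost_applyAct startF l0 (hus b (by simp)) c' t tm nd l gl cnt
      have : applyList startF l0 c' t nd (b :: rest)
          = applyList startF l0 (applyOne startF l0 c' t nd b) t nd rest := rfl
      rw [this]
      exact ih (fun b hb => hus b (by simp [hb])) c _ (h.trans' hstep)

theorem applyAct_threads_self {N M G LL VV : Type} [DecidableEq M] [DecidableEq G]
    (startF : Nat → N) (l0 : LL) (c : Config N M G LL VV) (t : TID) (tm : Nat) (v : N)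
    (l : LL) (cnt : Nat) (a : Act M G LL VV) :
    ∃ l2 cnt2, (applyAct startF l0 c t tm v l cnt a).threads t = some (tm, v, l2, cnt2) := by
  cases a <;>
    simp [applyAct, Function.update_self, Function.update_of_ne
      (show t ≠ t ++ [cnt] by simp)]

theorem aligned_proj {c : Config Node Mutex Global L V}
    {c' : Conf' Node Mutex Global L V GGlobal GLoc}
    (hal : Aligned c c') : projConfig c' = c := by
  refine Config.ext' (funext fun t => ?_) (funext fun m => hal.2.1 m)
    (funext fun g => hal.2.2 g)
  rcases hal.1 t with ⟨h1, h2⟩ | ⟨tm, u, l, cnt, gl, h1, h2⟩ <;>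
    simp [projConfig, h1, h2, projNode]

theorem proj_eq {c : Config Node Mutex Global L V}
    {c' : Conf' Node Mutex Global L V GGlobal GLoc} {t tm u l cnt nd gl}
    (hrest : ∀ s, s ≠ t → TAl (GLoc := GLoc) (c.threads s) (c'.threads s))
    (ht : c.threads t = some (tm, u, l, cnt))
    (ht' : c'.threads t = some (tm, nd, (l, gl), cnt))
    (hnd : projNode nd = u)
    (hm : ∀ m, c'.mutexes m = c.mutexes m)
    (hg : ∀ g, c'.globals (.inl g) = c.globals g) : projConfig c' = c := by
  refine Config.ext' (funext fun s => ?_) (funext fun m => hm m) (funext fun g => hg g)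
  by_cases hs : s = t
  · subst hs; simp [projConfig, ht', ht, hnd]
  · rcases hrest s hs with ⟨h1, h2⟩ | ⟨tm', u', l', cnt', gl', h1, h2⟩ <;>
      simp [projConfig, h1, h2, projNode]

theorem aligned_thread {c : Config Node Mutex Global L V}
    {c' : Conf' Node Mutex Global L V GGlobal GLoc} {t tm u l cnt}
    (hal : Aligned c c') (ht : c.threads t = some (tm, u, l, cnt)) :
    ∃ gl, c'.threads t = some (tm, .inl u, (l, gl), cnt) := by
  rcases hal.1 t with ⟨h1, _⟩ | ⟨tm', u', l', cnt', gl', h1, h2⟩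
  · rw [ht] at h1; cases h1
  · rw [ht] at h1
    obtain ⟨rfl, rfl, rfl, rfl⟩ : tm' = tm ∧ u' = u ∧ l' = l ∧ cnt' = cnt := by
      injection h1 with h1; injection h1 with h2 h1; injection h1 with h3 h1
      exact ⟨h2.symm, h3.symm, (by injection h1 with h4 h5; exact h4.symm),
        (by injection h1 with h4 h5; exact h5.symm)⟩
    exact ⟨gl', h2⟩

theorem aligned_after_ghost {c2 : Config Node Mutex Global L V}
    {cA cB : Conf' Node Mutex Global L V GGlobal GLoc} {t tm v l2 cnt2}
    (hal : Aligned c2 cA) (ht2 : c2.threads t = some (tm, v, l2, cnt2))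
    (hg : GRel t tm (.inl v) l2 cnt2 cA cB) : Aligned c2 cB := by
  obtain ⟨⟨gl, hB⟩, hoth, hmut, hglob⟩ := hg
  refine ⟨fun s => ?_, fun m => (hmut m).trans (hal.2.1 m),
    fun g => (hglob g).trans (hal.2.2 g)⟩
  by_cases hs : s = t
  · subst hs; exact Or.inr ⟨tm, v, l2, cnt2, gl, ht2, hB⟩
  · rw [hoth s hs]; exact hal.1 s

theorem TAl_update {c : Config Node Mutex Global L V}
    {c' : Conf' Node Mutex Global L V GGlobal GLoc} {t : TID}
    (hrest : ∀ s, s ≠ t → TAl (GLoc := GLoc) (c.threads s) (c'.threads s))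
    (tm : Nat) (v : Node) (l2 : L) (gl2 : GLoc) (cnt2 : Nat) :
    ∀ s, TAl (GLoc := GLoc)
      (Function.update c.threads t (some (tm, v, l2, cnt2)) s)
      (Function.update c'.threads t (some (tm, Sum.inl v, (l2, gl2), cnt2)) s) := by
  intro s
  by_cases hs : s = t
  · subst hs
    simp only [Function.update_self]
    exact Or.inr ⟨tm, v, l2, cnt2, gl2, rfl, rfl⟩
  · simp only [Function.update_of_ne hs]
    exact hrest s hs

theorem lift_adm {c : Config Node Mutex Global L V}
    {c' : Conf' Node Mutex Global L V GGlobal GLoc} {t : TID} {l : L} {gl : GLoc} {cnt : Nat}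
    (hrest : ∀ s, s ≠ t → TAl (GLoc := GLoc) (c.threads s) (c'.threads s))
    (hm : ∀ m, c'.mutexes m = c.mutexes m)
    (a : Act Mutex Global L V) (hadm : admissibleAct c t l cnt a) :
    admissibleAct c' t (l, gl) cnt (liftAct (GGlobal := GGlobal) (GLoc := GLoc) a) := by
  cases a with
  | lock m => show c'.mutexes m = none; rw [hm]; exact hadm
  | unlock m => show c'.mutexes m = some t; rw [hm]; exact hadm
  | create k =>
      show c'.threads (t ++ [cnt]) = none
      have hne : t ++ [cnt] ≠ t := by simp
      have hadm' : c.threads (t ++ [cnt]) = none := hadm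
      rcases hrest _ hne with ⟨_, h2⟩ | ⟨tm', u', l', cnt', gl', h1, h2⟩
      · exact h2
      · rw [h1] at hadm'; cases hadm'
  | pos p => exact hadm
  | neg p => exact hadm
  | localUpd f => trivial
  | read g f => trivial
  | write g f => trivial
  | assert p => trivial

theorem lift_apply (startF : Nat → Node) (l0 : L) (gl0 : GLoc)
    {c : Config Node Mutex Global L V}
    {c' : Conf' Node Mutex Global L V GGlobal GLoc} {t : TID} {tm : Nat} {l : L} {gl : GLoc}
    {cnt : Nat}
    (hrest : ∀ s, s ≠ t → TAl (GLoc := GLoc) (c.threads s) (c'.threads s))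
    (hm : ∀ m, c'.mutexes m = c.mutexes m)
    (hg : ∀ g, c'.globals (.inl g) = c.globals g)
    (a : Act Mutex Global L V) (v : Node) :
    Aligned (applyAct startF l0 c t tm v l cnt a)
      (applyAct (fun k => Sum.inl (startF k)) (l0, gl0) c' t tm (Sum.inl v) (l, gl) cnt
        (liftAct a)) := by
  cases a with
  | lock m =>
      refine ⟨TAl_update hrest tm v l gl cnt, fun m' => ?_, hg⟩
      by_cases hm' : m' = m
      · subst hm'; simp [applyAct, liftAct]
      · simp [applyAct, liftAct, Function.update_of_ne hm', hm m']
  | unlock m =>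
      refine ⟨TAl_update hrest tm v l gl cnt, fun m' => ?_, hg⟩
      by_cases hm' : m' = m
      · subst hm'; simp [applyAct, liftAct]
      · simp [applyAct, liftAct, Function.update_of_ne hm', hm m']
  | create k =>
      refine ⟨fun s => ?_, hm, hg⟩
      by_cases hs : s = t ++ [cnt]
      · subst hs
        simp only [applyAct, liftAct, Function.update_self]
        exact Or.inr ⟨k, startF k, l0, 0, gl0, rfl, rfl⟩
      · simp only [applyAct, liftAct, Function.update_of_ne hs]
        exact TAl_update hrest tm v l gl (cnt + 1) s
  | localUpd f => exact ⟨TAl_update hrest tm v (f l) gl cnt, hm, hg⟩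
  | read g f =>
      have hgl : c'.globals (Sum.inl g) = c.globals g := hg g
      refine ⟨?_, hm, hg⟩
      have := TAl_update hrest tm v (f l (c.globals g)) gl cnt
      simpa [applyAct, liftAct, hgl] using this
  | write g f =>
      refine ⟨TAl_update hrest tm v l gl cnt, hm, fun g' => ?_⟩
      by_cases hg' : g' = g
      · subst hg'; simp [applyAct, liftAct]
      · simp only [applyAct, liftAct]
        rw [Function.update_of_ne (by simp [hg']), Function.update_of_ne hg']
        exact hg g'
  | assert p => exact ⟨TAl_update hrest tm v l gl cnt, hm, hg⟩
  | pos p => exact ⟨TAl_update hrest tm v l gl cnt, hm, hg⟩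
  | neg p => exact ⟨TAl_update hrest tm v l gl cnt, hm, hg⟩

theorem delta_step {P : Prog Node Mutex Global L V} (W : Witness P GGlobal GLoc) (hW : W.WF)
    {c : Config Node Mutex Global L V} {c' : Conf' Node Mutex Global L V GGlobal GLoc}
    {t : TID} {tm : Nat} {u : Node} {l : L} {gl : GLoc} {cnt : Nat}
    {a : Act Mutex Global L V} {v : Node}
    (hrest : ∀ s, s ≠ t → TAl (GLoc := GLoc) (c.threads s) (c'.threads s))
    (ht : c.threads t = some (tm, u, l, cnt))
    (ht' : c'.threads t = some (tm, srcNode W u v, (l, gl), cnt))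
    (hm : ∀ m, c'.mutexes m = c.mutexes m)
    (hg : ∀ g, c'.globals (.inl g) = c.globals g)
    (hedge : P.edges tm u a v)
    (hadm : admissibleAct c t l cnt a) :
    ∃ c'', StepA (instrument P W) c' t (srcNode W u v, deltaAct W tm u v a, Sum.inl v) c'' ∧
      Aligned (applyAct P.start P.initLocal c t tm v l cnt a) c'' := by
  have hQstart : (instrument P W).start = fun k => Sum.inl (P.start k) := rfl
  have hQinit : (instrument P W).initLocal = (P.initLocal, W.glinit) := rfl
  have halA : Aligned (applyAct P.start P.initLocal c t tm v l cnt a)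
      (applyAct (fun k => Sum.inl (P.start k)) (P.initLocal, W.glinit) c' t tm
        (Sum.inl v) (l, gl) cnt (liftAct a)) :=
    lift_apply P.start P.initLocal W.glinit hrest hm hg a v
  have hadm' : admissibleAct c' t (l, gl) cnt (liftAct (GGlobal := GGlobal) (GLoc := GLoc) a) :=
    lift_adm hrest hm a hadm
  cases hupd : W.upd tm u v with
  | none =>
      have hδ : deltaAct W tm u v a = ActA.base (liftAct a) := by simp [deltaAct, hupd]
      rw [hδ]
      refine ⟨_, ⟨tm, (l, gl), cnt, ht', Or.inl ⟨u, a, v, hedge, rfl, hδ.symm, rfl⟩,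
        hadm', rfl⟩, halA⟩
  | some us =>
      have hδ : deltaAct W tm u v a = ActA.atomic (liftAct a) us := by simp [deltaAct, hupd]
      rw [hδ]
      have hus : ∀ b ∈ us, GhostUpd (GLoc := GLoc) b := hW.1 tm u v us hupd
      set mid := applyAct (fun k => Sum.inl (P.start k)) (P.initLocal, W.glinit) c' t tm
        (Sum.inl v) (l, gl) cnt (liftAct a) with hmid
      obtain ⟨l2, cnt2, h2⟩ := applyAct_threads_self P.start P.initLocal c t tm v l cnt a
      obtain ⟨gl2, hmidt⟩ := aligned_thread halA h2
      have hgrel : GRel t tm (Sum.inl v) l2 cnt2 mid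
          (applyList (fun k => Sum.inl (P.start k)) (P.initLocal, W.glinit) mid t
            (Sum.inl v) us) :=
        ghost_applyList _ _ (fun b hb => Or.inl (hus b hb)) mid mid (GRel.refl' hmidt)
      refine ⟨_, ⟨tm, (l, gl), cnt, ht', Or.inl ⟨u, a, v, hedge, rfl, hδ.symm, rfl⟩,
        hadm', fun b hb => ghost_simple (Or.inl (hus b hb)), rfl⟩, ?_⟩
      exact aligned_after_ghost halA h2 hgrel

theorem inv_step {P : Prog Node Mutex Global L V} (W : Witness P GGlobal GLoc) (hW : W.WF)
    {c' : Conf' Node Mutex Global L V GGlobal GLoc} {t : TID} {tm : Nat} {u : Node}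
    {l : L} {gl : GLoc} {cnt : Nat} {bs : List (Act Mutex (Global ⊕ GGlobal) (L × GLoc) V)}
    {a : Act Mutex Global L V} {v : Node}
    (ht' : c'.threads t = some (tm, Sum.inl u, (l, gl), cnt))
    (hinv : W.inv u = some bs)
    (hedge : P.edges tm u a v) :
    ∃ c'', StepA (instrument P W) c' t (Sum.inl u, invAct bs, Sum.inr (u, v)) c'' ∧
      GRel t tm (Sum.inr (u, v)) l cnt c' c'' := by
  have hbs : ∀ b ∈ bs, GhostStmt (GLoc := GLoc) b := hW.2 u bs hinv
  cases bs with
  | nil =>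
      refine ⟨_, ⟨tm, (l, gl), cnt, ht', Or.inr ⟨u, a, v, [], hedge, hinv, rfl, rfl, rfl⟩,
        trivial, by simp, rfl⟩, ?_⟩
      exact ghost_applyAct (instrument P W).start (instrument P W).initLocal
        (Or.inl (show GhostUpd (GLoc := GLoc) (Act.localUpd id) from fun p => rfl))
        c' t tm (Sum.inr (u, v)) l gl cnt
  | cons b rest =>
      have hb : GhostStmt (GLoc := GLoc) b := hbs b (by simp)
      refine ⟨_, ⟨tm, (l, gl), cnt, ht', Or.inr ⟨u, a, v, b :: rest, hedge, hinv, rfl, rfl, rfl⟩,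
        ghost_adm hb c' t (l, gl) cnt,
        fun b' hb' => ghost_simple (hbs b' (by simp [hb'])), rfl⟩, ?_⟩
      have h1 : GRel t tm (Sum.inr (u, v)) l cnt c'
          (applyAct (instrument P W).start (instrument P W).initLocal c' t tm
            (Sum.inr (u, v)) (l, gl) cnt b) :=
        ghost_applyAct _ _ hb c' t tm (Sum.inr (u, v)) l gl cnt
      exact ghost_applyList _ _ (fun b' hb' => hbs b' (by simp [hb'])) c' _ h1

theorem main_aux (P : Prog Node Mutex Global L V) (W : Witness P GGlobal GLoc)
    (hW : W.WF) (i : Interleaving P) :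
    ∀ m, (hm : m ≤ i.len) →
    ∃ (n : ℕ) (st : ℕ → Conf' Node Mutex Global L V GGlobal GLoc)
      (wh : ℕ → TID)
      (ed : ℕ → (Node ⊕ (Node × Node)) × ActA Mutex (Global ⊕ GGlobal) (L × GLoc) V ×
        (Node ⊕ (Node × Node)))
      (φ : ℕ → ℕ),
      IsInitGen (instrument P W).start (instrument P W).initLocal
        (instrument P W).initGlobal (st 0) ∧
      (∀ k, k < n → StepA (instrument P W) (st k) (wh k) (ed k) (st (k + 1))) ∧
      (∀ j, j < m → φ j < n) ∧
      (∀ j1 j2, j1 < j2 → j2 < m → φ j1 < φ j2) ∧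
      (∀ j, (hj : j < m) →
        wh (φ j) = i.who ⟨j, lt_of_lt_of_le hj hm⟩ ∧
        (∃ tmpl l cnt,
          (i.states (Fin.castSucc ⟨j, lt_of_lt_of_le hj hm⟩)).threads
              (i.who ⟨j, lt_of_lt_of_le hj hm⟩) =
            some (tmpl, (i.edge ⟨j, lt_of_lt_of_le hj hm⟩).1, l, cnt) ∧
          ed (φ j) = (srcNode W (i.edge ⟨j, lt_of_lt_of_le hj hm⟩).1
              (i.edge ⟨j, lt_of_lt_of_le hj hm⟩).2.2,
            deltaAct W tmpl (i.edge ⟨j, lt_of_lt_of_le hj hm⟩).1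
              (i.edge ⟨j, lt_of_lt_of_le hj hm⟩).2.2
              (i.edge ⟨j, lt_of_lt_of_le hj hm⟩).2.1,
            Sum.inl (i.edge ⟨j, lt_of_lt_of_le hj hm⟩).2.2)) ∧
        projConfig (st (φ j)) = i.states (Fin.castSucc ⟨j, lt_of_lt_of_le hj hm⟩)) ∧
      (∀ k, k < n → (∀ j, j < m → φ j ≠ k) → IsInvStep W (ed k)) ∧
      Aligned (i.states ⟨m, Nat.lt_succ_of_le hm⟩) (st n) := by
  intro m
  induction m with
  | zero =>
      intro hm
      obtain ⟨hthr0, hmut0, hglob0⟩ := i.init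
      refine ⟨0, fun _ => ⟨fun t => if t = ([] : TID) then
          some (0, Sum.inl (P.start 0), (P.initLocal, W.glinit), 0) else none,
          fun _ => none, Sum.elim P.initGlobal W.ginit⟩,
        fun _ => [],
        fun _ => (Sum.inl (P.start 0), ActA.base (Act.localUpd id), Sum.inl (P.start 0)),
        id, ⟨fun t => rfl, fun m => rfl, fun g => rfl⟩,
        fun k hk => absurd hk (Nat.not_lt_zero k),
        fun j hj => absurd hj (Nat.not_lt_zero j),
        fun j1 j2 _ hj => absurd hj (Nat.not_lt_zero j2),
        fun j hj => absurd hj (Nat.not_lt_zero j),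
        fun k hk => absurd hk (Nat.not_lt_zero k), ?_⟩
      have h0 : (⟨0, Nat.lt_succ_of_le hm⟩ : Fin (i.len + 1)) = 0 := by
        apply Fin.ext; simp
      rw [h0]
      refine ⟨fun t => ?_, fun m => (hmut0 m).symm, fun g => (hglob0 g).symm⟩
      rw [hthr0 t]
      by_cases htt : t = ([] : TID)
      · simp only [htt, if_pos rfl]
        exact Or.inr ⟨0, P.start 0, P.initLocal, 0, W.glinit, rfl, rfl⟩
      · simp only [if_neg htt]
        exact Or.inl ⟨rfl, rfl⟩
  | succ m ih =>
      intro hm1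
      obtain ⟨n, st, wh, ed, φ, hinit, hsteps, hφlt, hmono, hdata, hinvs, hal⟩ :=
        ih (Nat.le_of_succ_le hm1)
      have hmlt : m < i.len := hm1
      obtain ⟨tmpl, l, cnt, hthr, hedge, hadm, happ⟩ := i.consistent ⟨m, hmlt⟩
      have hal' : Aligned (i.states (Fin.castSucc ⟨m, hmlt⟩))
          (st n) := hal
      obtain ⟨gl, ht'⟩ := aligned_thread hal' hthr
      cases hinv : W.inv (i.edge ⟨m, hmlt⟩).1 with
      | none =>
          have hsrc : srcNode W (i.edge ⟨m, hmlt⟩).1 (i.edge ⟨m, hmlt⟩).2.2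
              = Sum.inl (i.edge ⟨m, hmlt⟩).1 := by simp [srcNode, hinv]
          obtain ⟨c1, hstepA, hal1⟩ := delta_step W hW (fun s _ => hal'.1 s) hthr
            (by rw [hsrc]; exact ht') hal'.2.1 hal'.2.2 hedge hadm
          refine ⟨n + 1, fun k => if k ≤ n then st k else c1,
            fun k => if k = n then i.who ⟨m, hmlt⟩ else wh k,
            fun k => if k = n then
                (srcNode W (i.edge ⟨m, hmlt⟩).1 (i.edge ⟨m, hmlt⟩).2.2,
                 deltaAct W tmpl (i.edge ⟨m, hmlt⟩).1 (i.edge ⟨m, hmlt⟩).2.2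
                   (i.edge ⟨m, hmlt⟩).2.1,
                 Sum.inl (i.edge ⟨m, hmlt⟩).2.2)
              else ed k,
            fun j => if j = m then n else φ j,
            ?_, ?_, ?_, ?_, ?_, ?_, ?_⟩
          · simpa using hinit
          · intro k hk
            by_cases hk' : k = n
            · subst hk'
              simp only [le_refl, if_pos, if_neg (by omega : ¬ k + 1 ≤ k), if_pos rfl]
              exact hstepA
            · have hkn : k < n := by omega
              simp only [if_pos (Nat.le_of_lt hkn), if_pos (Nat.succ_le_of_lt hkn),
                if_neg hk']
              exact hsteps k hkn
          · intro j hj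
            by_cases hjm : j = m
            · simp only [if_pos hjm]; omega
            · simp only [if_neg hjm]
              exact Nat.lt_succ_of_lt (hφlt j (by omega))
          · intro j1 j2 h12 h2m
            by_cases hj2 : j2 = m
            · simp only [if_neg (show j1 ≠ m by omega), if_pos hj2]
              exact hφlt j1 (by omega)
            · simp only [if_neg (show j1 ≠ m by omega), if_neg hj2]
              exact hmono j1 j2 h12 (by omega)
          · intro j hj
            by_cases hjm : j = m
            · subst hjm
              dsimp only
              rw [show (if j = j then n else φ j) = n from if_pos rfl]
              refine ⟨?_, ⟨tmpl, l, cnt, hthr, ?_⟩, ?_⟩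
              · rw [if_pos rfl]
              · rw [if_pos rfl]
              · rw [if_pos (le_refl n)]
                exact aligned_proj hal'
            · have hjm' : j < m := by omega
              have hφn : φ j ≠ n := by have := hφlt j hjm'; omega
              have hφn' : φ j ≤ n := by have := hφlt j hjm'; omega
              simp only [if_neg hjm, if_neg hφn, if_pos hφn']
              exact hdata j hjm'
          · intro k hk hne
            by_cases hk' : k = n
            · exact absurd ((if_pos rfl).trans hk'.symm :
                  (if m = m then n else φ m) = k) (hne m (by omega))
            · have hkn : k < n := by omega
              simp only [if_neg hk']
              refine hinvs k hkn (fun j hj => ?_)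
              have := hne j (by omega)
              simpa only [if_neg (show j ≠ m by omega)] using this
          · simp only [if_neg (by omega : ¬ n + 1 ≤ n)]
            have hgoal : i.states ⟨m + 1, Nat.lt_succ_of_le hm1⟩
                = i.states (Fin.succ ⟨m, hmlt⟩) := rfl
            rw [hgoal, happ]
            exact hal1
      | some bs =>
          have hsrc : srcNode W (i.edge ⟨m, hmlt⟩).1 (i.edge ⟨m, hmlt⟩).2.2
              = Sum.inr ((i.edge ⟨m, hmlt⟩).1, (i.edge ⟨m, hmlt⟩).2.2) := by
            simp [srcNode, hinv]
          obtain ⟨cmid, hstep1, hgrel⟩ := inv_step W hW ht' hinv hedge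
          obtain ⟨gl2, ht2'⟩ := hgrel.1
          have hrest2 : ∀ s, s ≠ i.who ⟨m, hmlt⟩ →
              TAl (GLoc := GLoc) ((i.states (Fin.castSucc ⟨m, hmlt⟩)).threads s)
                (cmid.threads s) := fun s hs => by
            rw [hgrel.2.1 s hs]; exact hal'.1 s
          have hm2 : ∀ mu, cmid.mutexes mu = (i.states (Fin.castSucc ⟨m, hmlt⟩)).mutexes mu :=
            fun mu => (hgrel.2.2.1 mu).trans (hal'.2.1 mu)
          have hg2 : ∀ g, cmid.globals (.inl g) = (i.states (Fin.castSucc ⟨m, hmlt⟩)).globals g :=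
            fun g => (hgrel.2.2.2 g).trans (hal'.2.2 g)
          obtain ⟨c1, hstep2, hal1⟩ := delta_step W hW hrest2 hthr
            (by rw [hsrc]; exact ht2') hm2 hg2 hedge hadm
          refine ⟨n + 2, fun k => if k ≤ n then st k else if k = n + 1 then cmid else c1,
            fun k => if k < n then wh k else i.who ⟨m, hmlt⟩,
            fun k => if k < n then ed k else if k = n then
                (Sum.inl (i.edge ⟨m, hmlt⟩).1, invAct bs,
                 Sum.inr ((i.edge ⟨m, hmlt⟩).1, (i.edge ⟨m, hmlt⟩).2.2))
              else
                (srcNode W (i.edge ⟨m, hmlt⟩).1 (i.edge ⟨m, hmlt⟩).2.2,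
                 deltaAct W tmpl (i.edge ⟨m, hmlt⟩).1 (i.edge ⟨m, hmlt⟩).2.2
                   (i.edge ⟨m, hmlt⟩).2.1,
                 Sum.inl (i.edge ⟨m, hmlt⟩).2.2),
            fun j => if j = m then n + 1 else φ j,
            ?_, ?_, ?_, ?_, ?_, ?_, ?_⟩
          · simpa using hinit
          · intro k hk
            by_cases hk1 : k < n
            · simp only [if_pos (Nat.le_of_lt hk1), if_pos (Nat.succ_le_of_lt hk1),
                if_pos hk1]
              exact hsteps k hk1
            · by_cases hk2 : k = n
              · subst hk2
                simp only [le_refl, if_pos, if_neg (by omega : ¬ k + 1 ≤ k),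
                  if_pos rfl, if_neg (by omega : ¬ k < k)]
                exact hstep1
              · have hk3 : k = n + 1 := by omega
                subst hk3
                simp only [if_neg (by omega : ¬ n + 1 ≤ n),
                  if_neg (by omega : ¬ n + 1 + 1 ≤ n), if_pos rfl,
                  if_neg (by omega : ¬ n + 1 + 1 = n + 1),
                  if_neg (by omega : ¬ n + 1 < n), if_neg (by omega : ¬ n + 1 = n)]
                exact hstep2
          · intro j hj
            by_cases hjm : j = m
            · simp only [if_pos hjm]; omega
            · simp only [if_neg hjm]
              have := hφlt j (by omega); omega
          · intro j1 j2 h12 h2m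
            by_cases hj2 : j2 = m
            · simp only [if_neg (show j1 ≠ m by omega), if_pos hj2]
              have := hφlt j1 (by omega); omega
            · simp only [if_neg (show j1 ≠ m by omega), if_neg hj2]
              exact hmono j1 j2 h12 (by omega)
          · intro j hj
            by_cases hjm : j = m
            · subst hjm
              dsimp only
              rw [show (if j = j then n + 1 else φ j) = n + 1 from if_pos rfl]
              refine ⟨?_, ⟨tmpl, l, cnt, hthr, ?_⟩, ?_⟩
              · rw [if_neg (show ¬ n + 1 < n by omega)]
              · rw [if_neg (show ¬ n + 1 < n by omega),
                  if_neg (show ¬ n + 1 = n by omega)]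
              · rw [if_neg (show ¬ n + 1 ≤ n by omega), if_pos rfl]
                exact proj_eq hrest2 hthr ht2' rfl hm2 hg2
            · have hjm' : j < m := by omega
              have h1 := hφlt j hjm'
              simp only [if_neg hjm, if_pos (Nat.le_of_lt h1), if_pos h1]
              exact hdata j hjm'
          · intro k hk hne
            by_cases hk1 : k < n
            · simp only [if_pos hk1]
              refine hinvs k hk1 (fun j hj => ?_)
              have := hne j (by omega)
              simpa only [if_neg (show j ≠ m by omega)] using this
            · by_cases hk2 : k = n
              · subst hk2
                simp only [if_neg (by omega : ¬ k < k), if_pos rfl]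
                exact ⟨(i.edge ⟨m, hmlt⟩).1, (i.edge ⟨m, hmlt⟩).2.2, bs, hinv, rfl⟩
              · have hk3 : k = n + 1 := by omega
                exact absurd ((if_pos rfl).trans hk3.symm :
                    (if m = m then n + 1 else φ m) = k) (hne m (by omega))
          · simp only [if_neg (by omega : ¬ n + 2 ≤ n), if_neg (by omega : ¬ n + 2 = n + 1)]
            have hgoal : i.states ⟨m + 1, Nat.lt_succ_of_le hm1⟩
                = i.states (Fin.succ ⟨m, hmlt⟩) := rfl
            rw [hgoal, happ]
            exact hal1

/-- Ghost instrumentation preserves runs: every consistent interleaving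
`i` of `P` gives rise to a consistent interleaving `π_ghost i` of the instrumented program
`P_W`, obtained by replacing each edge by its `δ_W`-image and inserting the `Ψ_W`
invariant-assertion steps; the final state of `π_ghost i` projects to the final state
of `i`. -/
theorem ghost_instrumentation_preserves_runs
    (P : Prog Node Mutex Global L V) (W : Witness P GGlobal GLoc) (hW : W.WF)
    (i : Interleaving P) :
    ∃ (i' : InterleavingA (instrument P W)) (φ : Fin i.len → Fin i'.len),
      StrictMono φ ∧
      (∀ j : Fin i.len, i'.who (φ j) = i.who j) ∧
      (∀ j : Fin i.len, ∃ tmpl l cnt,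
        (i.states j.castSucc).threads (i.who j) = some (tmpl, (i.edge j).1, l, cnt) ∧
        i'.edge (φ j) =
          (srcNode W (i.edge j).1 (i.edge j).2.2,
           deltaAct W tmpl (i.edge j).1 (i.edge j).2.2 (i.edge j).2.1,
           Sum.inl (i.edge j).2.2)) ∧
      (∀ j : Fin i.len, projConfig (i'.states (φ j).castSucc) = i.states j.castSucc) ∧
      (∀ j' : Fin i'.len, (∀ j : Fin i.len, φ j ≠ j') → IsInvStep W (i'.edge j')) ∧
      projConfig (i'.states (Fin.last i'.len)) = i.states (Fin.last i.len) := by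
  obtain ⟨n, st, wh, ed, φ, hinit, hsteps, hφlt, hmono, hdata, hinvs, hal⟩ :=
    main_aux P W hW i i.len (le_refl _)
  refine ⟨⟨n, fun k => st k.1, fun k => wh k.1, fun k => ed k.1, ?_,
      fun k => hsteps k.1 k.2⟩,
    fun j => ⟨φ j.1, hφlt j.1 j.2⟩, ?_, ?_, ?_, ?_, ?_, ?_⟩
  · simpa using hinit
  · intro a b h
    exact hmono a.1 b.1 h b.2
  · exact fun j => (hdata j.1 j.2).1
  · exact fun j => (hdata j.1 j.2).2.1
  · exact fun j => (hdata j.1 j.2).2.2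
  · intro j' hj'
    exact hinvs j'.1 j'.2 (fun j hj hφeq => hj' ⟨j, hj⟩ (Fin.ext hφeq))
  · exact aligned_proj hal
end CW
end

section
/- Correctness preservation: if some interleaving of the witness-instrumented program P_W violates an original-program assertion a at an edge δ_W(u,a,v), then there is an interleaving of the original program P that violates a at the edge (u,a,v). Consequently, instrumentation with a ghost witness cannot make a safe assertion of P violable. -/
namespace CW

variable {Node Mutex Global L V : Type}

variable [DecidableEq Mutex] [DecidableEq Global]

variable {GGlobal GLoc : Type} [DecidableEq GGlobal]

/-! ### Auxiliary machinery for the proof -/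

lemma config_ext {c c' : Config Node Mutex Global L V}
    (h1 : c.threads = c'.threads) (h2 : c.mutexes = c'.mutexes)
    (h3 : c.globals = c'.globals) : c = c' := by
  cases c; cases c'; simp_all

/-- Reachability in the interleaving semantics of `P`. -/
inductive Reach (P : Prog Node Mutex Global L V) : Config Node Mutex Global L V → Prop
  | init (c) : IsInit P c → Reach P c
  | step (c t e c') : Reach P c → Step P c t e c' → Reach P c'

/-- The trivial interleaving. -/
def Interleaving.mk0 (P : Prog Node Mutex Global L V) (c : Config Node Mutex Global L V)
    (h : IsInit P c) : Interleaving P :=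
  ⟨0, fun _ => c, Fin.elim0, Fin.elim0, h, fun k => k.elim0⟩

/-- Extend an interleaving by one step at the end. -/
def Interleaving.extend {P : Prog Node Mutex Global L V} (i : Interleaving P) (t : TID)
    (e : Node × Act Mutex Global L V × Node) (c' : Config Node Mutex Global L V)
    (h : Step P (i.states (Fin.last i.len)) t e c') : Interleaving P where
  len := i.len + 1
  states := Fin.snoc i.states c'
  who := Fin.snoc i.who t
  edge := Fin.snoc i.edge e
  init := by
    have h0 : (0 : Fin (i.len + 1 + 1)) = Fin.castSucc 0 := by simp
    rw [h0, Fin.snoc_castSucc]; exact i.init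
  consistent := by
    intro k
    induction k using Fin.lastCases with
    | last =>
      simp only [Fin.succ_last, Fin.snoc_last, Fin.snoc_castSucc]
      exact h
    | cast j =>
      simp only [Fin.succ_castSucc, Fin.snoc_castSucc]
      exact i.consistent j

lemma reach_run {P : Prog Node Mutex Global L V} {c : Config Node Mutex Global L V}
    (h : Reach P c) : ∃ i : Interleaving P, i.states (Fin.last i.len) = c := by
  induction h with
  | init c h => exact ⟨.mk0 P c h, rfl⟩
  | step c t e c' _ hs ih =>
    obtain ⟨i, hi⟩ := ih
    refine ⟨i.extend t e c' (hi ▸ hs), ?_⟩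
    simp [Interleaving.extend]

lemma reach_step_run {P : Prog Node Mutex Global L V} {c c' : Config Node Mutex Global L V}
    {t : TID} {e : Node × Act Mutex Global L V × Node}
    (h : Reach P c) (hs : Step P c t e c') :
    ∃ (i : Interleaving P) (k : Fin i.len),
      i.edge k = e ∧ i.who k = t ∧ i.states k.castSucc = c := by
  obtain ⟨i, hi⟩ := reach_run h
  refine ⟨i.extend t e c' (hi ▸ hs), Fin.last i.len, ?_, ?_, ?_⟩ <;>
    simp [Interleaving.extend, hi]

lemma update_map {α β γ : Type*} [DecidableEq α] (f : α → β) (g : β → γ) (a : α) (b : β)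
    (x : α) : g (Function.update f a b x) = Function.update (fun y => g (f y)) a (g b) x := by
  rcases eq_or_ne x a with rfl | h
  · simp
  · simp [Function.update_of_ne h]

lemma projNode_srcNode {P : Prog Node Mutex Global L V} (W : Witness P GGlobal GLoc)
    (u v : Node) : projNode (srcNode W u v) = u := by
  unfold srcNode; split <;> rfl

lemma srcNode_inj {P : Prog Node Mutex Global L V} {W : Witness P GGlobal GLoc}
    {u u' v v' : Node} (h : srcNode W u v = srcNode W u' v') : u = u' := by
  have := congrArg projNode h
  simpa [projNode_srcNode] using this

lemma liftAct_eq_assert {a : Act Mutex Global L V} {p : L → Bool} (gl : GLoc)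
    (h : liftAct (GGlobal := GGlobal) (GLoc := GLoc) a
        = Act.assert (fun q => p q.1)) : a = Act.assert p := by
  cases a <;> simp only [liftAct, Act.assert.injEq] at h <;> try exact absurd h (by simp)
  case assert p' =>
    have : p' = p := funext fun x => congrFun h (x, gl)
    rw [this]

lemma applyAct_threads_self_s10 {Node' : Type} (startF : Nat → Node') (l0 : L × GLoc)
    (c : Config Node' Mutex (Global ⊕ GGlobal) (L × GLoc) V) (t : TID) (tmpl : Nat)
    (v' : Node') (l : L × GLoc) (cnt : Nat) (a : Act Mutex (Global ⊕ GGlobal) (L × GLoc) V) :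
    ∃ l'' cnt'', (applyAct startF l0 c t tmpl v' l cnt a).threads t
      = some (tmpl, v', l'', cnt'') := by
  have hne : t ++ [cnt] ≠ t := by
    intro h; simpa using congrArg List.length h
  cases a <;>
    simp [applyAct, Function.update_of_ne hne]

lemma proj_applyAct_lift (P : Prog Node Mutex Global L V) (W : Witness P GGlobal GLoc)
    (c : Config (Node ⊕ (Node × Node)) Mutex (Global ⊕ GGlobal) (L × GLoc) V)
    (t : TID) (tmpl : Nat) (v : Node) (l : L × GLoc) (cnt : Nat) (a : Act Mutex Global L V) :
    projConfig (applyAct (instrument P W).start (instrument P W).initLocal c t tmpl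
        (Sum.inl v) l cnt (liftAct a))
      = applyAct P.start P.initLocal (projConfig c) t tmpl v l.1 cnt a := by
  cases a <;>
    refine config_ext (funext fun s => ?_) rfl (funext fun g => ?_) <;>
      simp only [applyAct, liftAct, projConfig, instrument, Function.update_apply] <;>
      first
        | rfl
        | (split_ifs <;> simp_all [projNode])

lemma adm_lift {c : Config (Node ⊕ (Node × Node)) Mutex (Global ⊕ GGlobal) (L × GLoc) V}
    {t : TID} {l : L × GLoc} {cnt : Nat} {a : Act Mutex Global L V}
    (h : admissibleAct c t l cnt (liftAct (GGlobal := GGlobal) (GLoc := GLoc) a)) :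
    admissibleAct (projConfig c) t l.1 cnt a := by
  cases a <;> simp_all [admissibleAct, liftAct, projConfig]

lemma ghost_applyAct_proj {b : Act Mutex (Global ⊕ GGlobal) (L × GLoc) V}
    (hb : GhostStmt b) (startF : Nat → Node ⊕ (Node × Node)) (l0 : L × GLoc)
    (c : Config (Node ⊕ (Node × Node)) Mutex (Global ⊕ GGlobal) (L × GLoc) V)
    (t : TID) (tmpl : Nat) (v' n0 : Node ⊕ (Node × Node)) (l : L × GLoc) (cnt : Nat)
    (hth : c.threads t = some (tmpl, n0, l, cnt)) (hn : projNode n0 = projNode v') :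
    projConfig (applyAct startF l0 c t tmpl v' l cnt b) = projConfig c ∧
    ∃ l'', (applyAct startF l0 c t tmpl v' l cnt b).threads t = some (tmpl, v', l'', cnt) := by
  rcases hb with hb | ⟨p, rfl⟩
  · cases b with
    | localUpd f =>
      refine ⟨config_ext (funext fun s => ?_) rfl rfl, f l, by simp [applyAct]⟩
      simp only [applyAct, projConfig, Function.update_apply]
      split_ifs with h
      · subst h; simp [hth, hb l, ← hn]
      · rfl
    | read g f =>
      refine ⟨config_ext (funext fun s => ?_) rfl rfl, f l (c.globals g), by simp [applyAct]⟩
      simp only [applyAct, projConfig, Function.update_apply]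
      split_ifs with h
      · subst h; simp [hth, hb l, ← hn]
      · rfl
    | write g f =>
      obtain ⟨gg, rfl⟩ := hb
      refine ⟨config_ext (funext fun s => ?_) rfl (funext fun g => ?_), l, by simp [applyAct]⟩
      · simp only [applyAct, projConfig, Function.update_apply]
        split_ifs with h
        · subst h; simp [hth, ← hn]
        · rfl
      · simp only [applyAct, projConfig, Function.update_apply]
        split_ifs <;> simp_all
    | lock m => exact absurd hb (by simp [GhostUpd])
    | unlock m => exact absurd hb (by simp [GhostUpd])
    | create k => exact absurd hb (by simp [GhostUpd])
    | assert p => exact absurd hb (by simp [GhostUpd])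
    | pos p => exact absurd hb (by simp [GhostUpd])
    | neg p => exact absurd hb (by simp [GhostUpd])
  · refine ⟨config_ext (funext fun s => ?_) rfl rfl, l, by simp [applyAct]⟩
    simp only [applyAct, projConfig, Function.update_apply]
    split_ifs with h
    · subst h; simp [hth, ← hn]
    · rfl

lemma ghost_applyList_proj (startF : Nat → Node ⊕ (Node × Node)) (l0 : L × GLoc)
    (t : TID) (v' : Node ⊕ (Node × Node)) :
    ∀ (bs : List (Act Mutex (Global ⊕ GGlobal) (L × GLoc) V)),
      (∀ b ∈ bs, GhostStmt b) →
      ∀ (c : Config (Node ⊕ (Node × Node)) Mutex (Global ⊕ GGlobal) (L × GLoc) V)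
        (tmpl : Nat) (n0 : Node ⊕ (Node × Node)) (l : L × GLoc) (cnt : Nat),
        c.threads t = some (tmpl, n0, l, cnt) → projNode n0 = projNode v' →
        projConfig (applyList startF l0 c t v' bs) = projConfig c := by
  intro bs
  induction bs with
  | nil => intros; rfl
  | cons b bs ih =>
    intro hbs c tmpl n0 l cnt hth hn
    obtain ⟨hproj, l'', hth'⟩ :=
      ghost_applyAct_proj (hbs b (by simp)) startF l0 c t tmpl v' n0 l cnt hth hn
    have ho : applyOne startF l0 c t v' b = applyAct startF l0 c t tmpl v' l cnt b := by
      simp [applyOne, hth]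
    show projConfig (applyList startF l0 (applyOne startF l0 c t v' b) t v' bs) = projConfig c
    rw [ho, ih (fun x hx => hbs x (by simp [hx])) _ tmpl v' l'' cnt hth' rfl, hproj]

lemma proj_init (P : Prog Node Mutex Global L V) (W : Witness P GGlobal GLoc)
    (c : Config (Node ⊕ (Node × Node)) Mutex (Global ⊕ GGlobal) (L × GLoc) V)
    (h : IsInitGen (instrument P W).start (instrument P W).initLocal
        (instrument P W).initGlobal c) : IsInit P (projConfig c) := by
  obtain ⟨h1, h2, h3⟩ := h
  refine ⟨fun t => ?_, h2, fun g => ?_⟩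
  · show (c.threads t).map _ = _
    rw [h1 t]
    split <;> simp [instrument, projNode]
  · show c.globals (Sum.inl g) = _
    rw [h3]; rfl

/-- Back-projection simulation: every state reached by the instrumented program projects
to a reachable state of the original program. -/
lemma reach_proj (P : Prog Node Mutex Global L V) (W : Witness P GGlobal GLoc) (hW : W.WF)
    (i' : InterleavingA (instrument P W)) :
    ∀ m : Fin (i'.len + 1), Reach P (projConfig (i'.states m)) := by
  intro m
  induction m using Fin.induction with
  | zero => exact .init _ (proj_init P W _ i'.init)
  | succ k ih =>
    obtain ⟨tmpl, l, cnt, hth, hedges, hmatch⟩ := i'.consistent k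
    rcases hedges with ⟨u, a, v, hPe, he1, hact, he2⟩ | ⟨u, a, v, bs, hPe, hinv, he1, hact, he2⟩
    · -- an instrumented original edge
      have hstep : Step P (projConfig (i'.states k.castSucc)) (i'.who k) (u, a, v)
          (projConfig (i'.states k.succ)) := by
        refine ⟨tmpl, l.1, cnt, ?_, hPe, ?_, ?_⟩
        · show ((i'.states k.castSucc).threads (i'.who k)).map _ = _
          rw [hth, he1]
          simp [projNode_srcNode]
        · rcases h1 : W.upd tmpl u v with _ | us <;>
            rw [hact] at hmatch <;> rw [deltaAct, h1] at hmatch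
          · exact adm_lift hmatch.1
          · exact adm_lift hmatch.1
        · rcases h1 : W.upd tmpl u v with _ | us <;>
            rw [hact] at hmatch <;> rw [deltaAct, h1] at hmatch
          · rw [hmatch.2, he2, proj_applyAct_lift]
          · obtain ⟨hadm, hsimple, hc'⟩ := hmatch
            rw [hc', he2]
            obtain ⟨l'', cnt'', hth'⟩ :=
              applyAct_threads_self_s10 (instrument P W).start (instrument P W).initLocal
                (i'.states k.castSucc) (i'.who k) tmpl (Sum.inl v) l cnt (liftAct a)
            rw [ghost_applyList_proj (instrument P W).start (instrument P W).initLocal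
              (i'.who k) (Sum.inl v) us
              (fun b hb => Or.inl (hW.1 tmpl u v us h1 b hb)) _ tmpl (Sum.inl v) l'' cnt''
              hth' rfl]
            rw [proj_applyAct_lift]
      exact .step _ _ _ _ ih hstep
    · -- an inserted invariant edge: projection is unchanged
      have hgs : ∀ b ∈ bs, GhostStmt (Mutex := Mutex) (V := V) (GLoc := GLoc) b :=
        hW.2 u bs hinv
      have hn : projNode (Sum.inl u : Node ⊕ (Node × Node)) = projNode (i'.edge k).2.2 := by
        rw [he2]; rfl
      rw [he1] at hth
      have heq : projConfig (i'.states k.succ) = projConfig (i'.states k.castSucc) := by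
        cases bs with
        | nil =>
          rw [hact] at hmatch
          obtain ⟨hadm, -, hc'⟩ := hmatch
          obtain ⟨hproj, -⟩ :=
            ghost_applyAct_proj (b := Act.localUpd id) (Or.inl fun p => rfl)
              (instrument P W).start (instrument P W).initLocal
              (i'.states k.castSucc) (i'.who k) tmpl (i'.edge k).2.2 (Sum.inl u) l cnt hth hn
          rw [hc']
          exact hproj
        | cons b bs' =>
          rw [hact] at hmatch
          obtain ⟨hadm, -, hc'⟩ := hmatch
          obtain ⟨hproj, l'', hth'⟩ :=
            ghost_applyAct_proj (hgs b (by simp))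
              (instrument P W).start (instrument P W).initLocal
              (i'.states k.castSucc) (i'.who k) tmpl (i'.edge k).2.2 (Sum.inl u) l cnt hth hn
          rw [hc',
            ghost_applyList_proj (instrument P W).start (instrument P W).initLocal
              (i'.who k) (i'.edge k).2.2 bs' (fun x hx => hgs x (by simp [hx])) _ tmpl
              (i'.edge k).2.2 l'' cnt hth' rfl]
          exact hproj
      rw [heq]
      exact ih

/-- Correctness preservation: if some interleaving of the
witness-instrumented program `P_W` violates an original-program assertion at an edge
`δ_W (u, assert p, v)`, then there is an interleaving of the original program `P` that
violates the same assertion at the edge `(u, assert p, v)`. Consequently, instrumentation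
with a ghost witness cannot make a safe assertion of `P` violable. -/
theorem correctness_preservation
    (P : Prog Node Mutex Global L V) (W : Witness P GGlobal GLoc) (hW : W.WF) :
    (∀ (i' : InterleavingA (instrument P W)) (k' : Fin i'.len) (tmpl : Nat)
      (p : L → Bool) (u v : Node),
      i'.edge k' = (srcNode W u v, deltaAct W tmpl u v (Act.assert p), Sum.inl v) →
      i'.ViolatesAt k' →
      ∃ (i : Interleaving P) (k : Fin i.len),
        i.edge k = (u, Act.assert p, v) ∧ i.ViolatesAt k) ∧
    (Safe P →
      ∀ (i' : InterleavingA (instrument P W)) (k' : Fin i'.len) (tmpl : Nat)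
        (p : L → Bool) (u v : Node),
        i'.edge k' = (srcNode W u v, deltaAct W tmpl u v (Act.assert p), Sum.inl v) →
        ¬ i'.ViolatesAt k') := by
  have main : ∀ (i' : InterleavingA (instrument P W)) (k' : Fin i'.len) (tmpl : Nat)
      (p : L → Bool) (u v : Node),
      i'.edge k' = (srcNode W u v, deltaAct W tmpl u v (Act.assert p), Sum.inl v) →
      i'.ViolatesAt k' →
      ∃ (i : Interleaving P) (k : Fin i.len),
        i.edge k = (u, Act.assert p, v) ∧ i.ViolatesAt k := by
    intro i' k' tmpl p u v hedge hviol
    obtain ⟨tmpl2, l, cnt, hth, hedges, -⟩ := i'.consistent k'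
    rw [hedge] at hth hedges
    simp only at hth hedges
    rcases hedges with ⟨u1, a1, v1, hPe, he1, hact, he2⟩ |
      ⟨u1, a1, v1, bs, hPe, hinv, he1, hact, he2⟩
    swap
    · simp at he2
    obtain rfl : v = v1 := Sum.inl.inj he2
    have hu : u = u1 := srcNode_inj he1
    subst hu
    -- the original action must be the assertion itself
    have ha : a1 = Act.assert p := by
      rcases h1 : W.upd tmpl u v with _ | us <;> rcases h2 : W.upd tmpl2 u v with _ | us2 <;>
        rw [deltaAct, h1, deltaAct, h2] at hact
      · exact liftAct_eq_assert l.2 (by rw [← ActA.base.inj hact]; rfl)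
      · exact absurd hact (by simp)
      · exact absurd hact (by simp)
      · exact liftAct_eq_assert l.2 (by rw [← (ActA.atomic.inj hact).1]; rfl)
    subst ha
    -- extract the violated local state
    obtain ⟨tmpl3, l3, cnt3, hth3, hm3⟩ := hviol
    rw [hedge] at hth3 hm3
    simp only at hth3 hm3
    have heq := hth.symm.trans hth3
    simp only [Option.some.injEq, Prod.mk.injEq] at heq
    obtain ⟨rfl, -, rfl, rfl⟩ := heq
    have hfalse : p l.1 = false := by
      rcases h1 : W.upd tmpl u v with _ | us <;>
        simp only [deltaAct, h1] at hm3
      · obtain ⟨p', hp', hf⟩ := hm3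
        rw [← (Act.assert.inj hp')] at hf
        exact hf
      · rcases hm3 with ⟨p', hp', hf⟩ | ⟨n, p', hget, -⟩
        · rw [← (Act.assert.inj hp')] at hf
          exact hf
        · exact (hW.1 tmpl u v us h1 (Act.assert p') (List.mem_of_getElem? hget)).elim
    -- build the violating interleaving of P
    have hreach := reach_proj P W hW i' k'.castSucc
    have hthp : (projConfig (i'.states k'.castSucc)).threads (i'.who k')
        = some (tmpl2, u, l.1, cnt) := by
      show ((i'.states k'.castSucc).threads (i'.who k')).map _ = _
      rw [hth]
      simp [projNode_srcNode]
    have hstep : Step P (projConfig (i'.states k'.castSucc)) (i'.who k') (u, Act.assert p, v)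
        (applyAct P.start P.initLocal (projConfig (i'.states k'.castSucc)) (i'.who k') tmpl2 v
          l.1 cnt (Act.assert p)) :=
      ⟨tmpl2, l.1, cnt, hthp, hPe, trivial, rfl⟩
    obtain ⟨i, k, hke, hkw, hks⟩ := reach_step_run hreach hstep
    refine ⟨i, k, hke, p, u, v, hke, tmpl2, l.1, cnt, ?_, hfalse⟩
    rw [hks, hkw]
    exact hthp
  exact ⟨main, fun hsafe i' k' tmpl p u v hedge hviol => by
    obtain ⟨i, k, -, hv⟩ := main i' k' tmpl p u v hedge hviol
    exact hsafe i k hv⟩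
end CW
end
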